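/- In the partial order (𝒲, ≤), a pair A < B is a gap (i.e., A < B and there is no C ∈ 𝒲 with A < C < B) if and only if there exists a word W ∈ B such that both one-letter extensions W++[0] and W++[1] belong to A and A \ {W++[0], W++[1]} = B \ {W}. -/

import Mathlib

/-- `A` is a finite antichain of binary words under the prefix relation. -/
def WAntichain (A : Finset (List Bool)) : Prop :=
  ∀ W ∈ A, ∀ W' ∈ A, W ≠ W' → ¬ W' <+: W

/-- The order on finite sets of binary words: `A ≤ B` iff every word of `A` has a
prefix belonging to `B`. -/
def Wle (A B : Finset (List Bool)) : Prop :=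
  ∀ W ∈ A, ∃ W' ∈ B, W' <+: W

/-!
Going up in `𝒲` replaces words by prefixes. Given `A < B`, pick `b ∈ B \ A`. If no word of `A`
extends `b`, adding `b ++ [0]` to `A` gives an antichain strictly between `A` and `B`. Otherwise
take a longest word `t ++ [c]` of `A` extending `b`: if its sibling `t ++ [!c]` is not in `A`,
adding the sibling gives one; if it is, merging the two children of `t` into `t` gives `C` with
`A < C ≤ B`, so a gap forces `C = B`. Conversely, an antichain `C` between `A` and the merge of the
children of `W` contains every word of `A` outside the subtree of `W`, and inside that subtree
either `W` (then `C` is the merge) or both children (then `C = A`).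
-/

namespace List

theorem exists_concat_prefix_of_prefix_of_ne {α : Type*} {t x : List α} (h : t <+: x)
    (hne : t ≠ x) : ∃ d, t ++ [d] <+: x := by
  obtain ⟨_ | ⟨d, s⟩, rfl⟩ := h
  · exact absurd (append_nil t).symm hne
  · exact ⟨d, s, by simp⟩

theorem exists_eq_concat_of_prefix_of_ne {α : Type*} {b a : List α} (h : b <+: a)
    (hne : b ≠ a) : ∃ t c, a = t ++ [c] ∧ b <+: t := by
  obtain rfl | ⟨t, c, rfl⟩ := eq_nil_or_concat' a
  · exact absurd (prefix_nil.mp h) hne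
  · exact ⟨t, c, rfl, (prefix_concat_iff.mp h).resolve_left hne⟩

end List

def WBetween (A C B : Finset (List Bool)) : Prop :=
  WAntichain C ∧ (Wle A C ∧ A ≠ C) ∧ (Wle C B ∧ C ≠ B)

def mergeChildren (A : Finset (List Bool)) (W : List Bool) : Finset (List Bool) :=
  insert W (A \ {W ++ [false], W ++ [true]})

variable {A B C : Finset (List Bool)} {a b t W : List Bool}

namespace WAntichain

theorem eq_of_prefix (hA : WAntichain A) (ha : a ∈ A) (hb : b ∈ A) (h : a <+: b) : a = b := by
  by_contra hne
  exact hA b hb a ha (Ne.symm hne) h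

theorem not_mem_of_concat_mem (hA : WAntichain A) {d : Bool} (h : W ++ [d] ∈ A) : W ∉ A :=
  fun hW ↦ by simpa using hA.eq_of_prefix hW h (List.prefix_append W [d])

theorem mono (hA : WAntichain A) (h : B ⊆ A) : WAntichain B :=
  fun x hx y hy ↦ hA x (h hx) y (h hy)

theorem insert {x : List Bool} (hA : WAntichain A)
    (hx : ∀ a ∈ A, a ≠ x → ¬ a <+: x ∧ ¬ x <+: a) : WAntichain (insert x A) := by
  intro u hu v hv huv
  rw [Finset.mem_insert] at hu hv
  rcases hu with rfl | hu <;> rcases hv with rfl | hv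
  · exact absurd rfl huv
  · exact (hx v hv (Ne.symm huv)).1
  · exact (hx u hu huv).2
  · exact hA u hu v hv huv

theorem mergeChildren_of_concat_mem (hA : WAntichain A) (h0 : t ++ [false] ∈ A)
    (h1 : t ++ [true] ∈ A) : WAntichain (mergeChildren A t) := by
  refine (hA.mono Finset.sdiff_subset).insert fun a ha hat ↦ ⟨fun hpre ↦ ?_, fun hpre ↦ ?_⟩
  all_goals
    obtain ⟨haA, ha'⟩ := Finset.mem_sdiff.mp ha
    simp only [Finset.mem_insert, Finset.mem_singleton, not_or] at ha'
  · exact ha'.1 (hA.eq_of_prefix haA h0 (hpre.trans (List.prefix_append t _)))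
  · obtain ⟨d, hd⟩ := List.exists_concat_prefix_of_prefix_of_ne hpre (Ne.symm hat)
    have hdA : t ++ [d] ∈ A := by cases d <;> assumption
    cases d
    · exact ha'.1 (hA.eq_of_prefix hdA haA hd).symm
    · exact ha'.2 (hA.eq_of_prefix hdA haA hd).symm

end WAntichain

namespace Wle

theorem of_subset (h : A ⊆ B) : Wle A B :=
  fun x hx ↦ ⟨x, h hx, List.prefix_refl x⟩

theorem insert {x : List Bool} (hx : ∃ b ∈ B, b <+: x) (hAB : Wle A B) :
    Wle (insert x A) B := by
  intro y hy
  rcases Finset.mem_insert.mp hy with rfl | hy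
  exacts [hx, hAB y hy]

theorem eq_of_prefix (hAB : Wle A B) (hB : WAntichain B) (ha : a ∈ A) (hb : b ∈ B)
    (h : a <+: b) : a = b := by
  obtain ⟨p, hp, hpa⟩ := hAB a ha
  obtain rfl := hB.eq_of_prefix hp hb (hpa.trans h)
  exact antisymm h hpa

theorem eq_of_subset (hAB : Wle A B) (hA : WAntichain A) (h : B ⊆ A) : A = B := by
  refine Finset.Subset.antisymm (fun x hx ↦ ?_) h
  obtain ⟨p, hp, hpx⟩ := hAB x hx
  rwa [← hA.eq_of_prefix (h hp) hx hpx]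

theorem mem_of_mem_of_mem (hAC : Wle A C) (hCB : Wle C B) (hB : WAntichain B) {x : List Bool}
    (hxA : x ∈ A) (hxB : x ∈ B) : x ∈ C := by
  obtain ⟨v, hv, hvx⟩ := hAC x hxA
  rwa [← hCB.eq_of_prefix hB hv hxB hvx]

theorem concat_mem_of_not_mem (hAC : Wle A C) (hCB : Wle C B) (hB : WAntichain B)
    (hW : W ∈ B) (hWC : W ∉ C) {d : Bool} (hd : W ++ [d] ∈ A) : W ++ [d] ∈ C := by
  obtain ⟨v, hv, hvd⟩ := hAC _ hd
  rcases List.prefix_concat_iff.mp hvd with rfl | hvW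
  · exact hv
  obtain ⟨p, hp, hpv⟩ := hCB v hv
  obtain rfl := hB.eq_of_prefix hp hW (hpv.trans hvW)
  exact absurd (antisymm hvW hpv ▸ hv) hWC

end Wle

theorem wle_mergeChildren (A : Finset (List Bool)) (t : List Bool) :
    Wle A (mergeChildren A t) := by
  intro x hx
  by_cases hxt : x = t ++ [false] ∨ x = t ++ [true]
  · refine ⟨t, Finset.mem_insert_self _ _, ?_⟩
    rcases hxt with rfl | rfl <;> exact List.prefix_append _ _
  · refine ⟨x, Finset.mem_insert_of_mem (Finset.mem_sdiff.mpr ⟨hx, ?_⟩), List.prefix_refl x⟩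
    simpa using hxt

theorem ne_mergeChildren (h0 : t ++ [false] ∈ A) : A ≠ mergeChildren A t := by
  intro h
  rw [h, mergeChildren] at h0
  simp at h0

theorem eq_mergeChildren_iff (hA : WAntichain A) (h0 : W ++ [false] ∈ A) :
    (W ∈ B ∧ A \ {W ++ [false], W ++ [true]} = B \ {W}) ↔ B = mergeChildren A W := by
  have hWA := hA.not_mem_of_concat_mem h0
  constructor
  · rintro ⟨hW, hAB⟩
    rw [mergeChildren, hAB, Finset.sdiff_singleton_eq_erase, Finset.insert_erase hW]
  · rintro rfl
    refine ⟨Finset.mem_insert_self _ _, ?_⟩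
    ext x
    simp only [mergeChildren, Finset.mem_sdiff, Finset.mem_insert, Finset.mem_singleton]
    constructor
    · rintro ⟨hx, hx'⟩
      exact ⟨Or.inr ⟨hx, hx'⟩, fun h ↦ hWA (h ▸ hx)⟩
    · rintro ⟨rfl | h, hxW⟩
      exacts [absurd rfl hxW, h]

theorem wBetween_insert_concat_of_forall_not_prefix (hA : WAntichain A)
    (hB : WAntichain B) (hAB : Wle A B) (hb : b ∈ B) (hbA : ∀ a ∈ A, ¬ b <+: a) :
    WBetween A (insert (b ++ [false]) A) B := by
  refine ⟨hA.insert fun a ha hne ↦ ⟨fun hpre ↦ ?_, fun hpre ↦ ?_⟩,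
    ⟨Wle.of_subset (Finset.subset_insert _ _), fun h ↦ ?_⟩,
    hAB.insert ⟨b, hb, List.prefix_append _ _⟩, fun h ↦ ?_⟩
  · rcases List.prefix_concat_iff.mp hpre with h | h
    · exact hne h
    · exact hbA a ha (hAB.eq_of_prefix hB ha hb h ▸ List.prefix_refl a)
  · exact hbA a ha ((List.prefix_append _ _).trans hpre)
  · exact hbA _ (h ▸ Finset.mem_insert_self _ _) (List.prefix_append _ _)
  · have := hB.eq_of_prefix hb (h ▸ Finset.mem_insert_self _ _) (List.prefix_append _ _)
    simp at this

theorem wBetween_insert_sibling (hA : WAntichain A) (hB : WAntichain B)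
    (hAB : Wle A B) (hb : b ∈ B) (hbt : b <+: t) {c : Bool} (ha : t ++ [c] ∈ A)
    (hmax : ∀ x ∈ A, b <+: x → x.length ≤ (t ++ [c]).length) (hs : t ++ [!c] ∉ A) :
    WBetween A (insert (t ++ [!c]) A) B := by
  refine ⟨hA.insert fun x hx hne ↦ ⟨fun hpre ↦ ?_, fun hpre ↦ ?_⟩,
    ⟨Wle.of_subset (Finset.subset_insert _ _), fun h ↦ hs (h ▸ Finset.mem_insert_self _ _)⟩,
    hAB.insert ⟨b, hb, hbt.trans (List.prefix_append _ _)⟩, fun h ↦ ?_⟩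
  · have hxt := (List.prefix_concat_iff.mp hpre).resolve_left hne
    have hxa := hA.eq_of_prefix hx ha (hxt.trans (List.prefix_append _ _))
    simpa [hxa] using hxt.length_le
  · have hlen := hmax x hx (hbt.trans ((List.prefix_append _ _).trans hpre))
    exact hne (hpre.eq_of_length (le_antisymm hpre.length_le (by simpa using hlen))).symm
  · have hab : b ≠ t ++ [c] := by
      rintro rfl
      simpa using hbt.length_le
    exact hab (hB.eq_of_prefix hb (h ▸ Finset.mem_insert_of_mem ha)
      (hbt.trans (List.prefix_append _ _)))

theorem exists_eq_mergeChildren_of_gap (hA : WAntichain A) (hB : WAntichain B)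
    (hAB : Wle A B) (hne : A ≠ B) (hgap : ¬ ∃ C, WBetween A C B) :
    ∃ t, t ++ [false] ∈ A ∧ t ++ [true] ∈ A ∧ mergeChildren A t = B := by
  obtain ⟨b, hbB, hbA⟩ : ∃ b ∈ B, b ∉ A := by
    by_contra! h
    exact hne (hAB.eq_of_subset hA h)
  by_cases hext : ∃ a ∈ A, b <+: a
  swap
  · push Not at hext
    exact absurd ⟨_, wBetween_insert_concat_of_forall_not_prefix hA hB hAB hbB hext⟩ hgap
  obtain ⟨a, haS, hmax⟩ := (A.filter (b <+: ·)).exists_max_image List.length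
    (by simpa [Finset.Nonempty] using hext)
  obtain ⟨haA, hba⟩ := Finset.mem_filter.mp haS
  obtain ⟨t, c, rfl, hbt⟩ :=
    List.exists_eq_concat_of_prefix_of_ne hba (fun h ↦ hbA (h ▸ haA))
  by_cases hs : t ++ [!c] ∈ A
  swap
  · refine absurd ⟨_, wBetween_insert_sibling hA hB hAB hbB hbt haA ?_ hs⟩ hgap
    exact fun x hx hbx ↦ hmax x (Finset.mem_filter.mpr ⟨hx, hbx⟩)
  have h0 : t ++ [false] ∈ A := by cases c <;> assumption
  have h1 : t ++ [true] ∈ A := by cases c <;> assumption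
  refine ⟨t, h0, h1, by_contra fun hCB ↦ hgap ⟨_, hA.mergeChildren_of_concat_mem h0 h1,
    ⟨wle_mergeChildren A t, ne_mergeChildren h0⟩, ?_, hCB⟩⟩
  exact Wle.insert ⟨b, hbB, hbt⟩ fun x hx ↦ hAB x (Finset.mem_sdiff.mp hx).1

theorem eq_or_eq_of_wle_mergeChildren (hB : WAntichain (mergeChildren A W))
    (hC : WAntichain C) (h0 : W ++ [false] ∈ A) (h1 : W ++ [true] ∈ A) (hAC : Wle A C)
    (hCB : Wle C (mergeChildren A W)) : C = A ∨ C = mergeChildren A W := by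
  have hW : W ∈ mergeChildren A W := Finset.mem_insert_self _ _
  have hrest : ∀ x ∈ A, x ∉ ({W ++ [false], W ++ [true]} : Finset _) → x ∈ C :=
    fun x hx hx' ↦ hAC.mem_of_mem_of_mem hCB hB hx
      (Finset.mem_insert_of_mem (Finset.mem_sdiff.mpr ⟨hx, hx'⟩))
  by_cases hWC : W ∈ C
  · refine Or.inr (hCB.eq_of_subset hC fun x hx ↦ ?_)
    rcases Finset.mem_insert.mp hx with rfl | hx
    exacts [hWC, hrest x (Finset.mem_sdiff.mp hx).1 (Finset.mem_sdiff.mp hx).2]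
  refine Or.inl (Wle.eq_of_subset (fun x hx ↦ ?_) hC fun x hx ↦ ?_)
  · obtain ⟨u, hu, hux⟩ := hCB x hx
    rcases Finset.mem_insert.mp hu with rfl | hu
    · obtain ⟨d, hd⟩ := List.exists_concat_prefix_of_prefix_of_ne hux (fun h ↦ hWC (h ▸ hx))
      exact ⟨_, by cases d <;> assumption, hd⟩
    · exact ⟨u, (Finset.mem_sdiff.mp hu).1, hux⟩
  · by_cases hx' : x ∈ ({W ++ [false], W ++ [true]} : Finset _)
    · simp only [Finset.mem_insert, Finset.mem_singleton] at hx'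
      rcases hx' with rfl | rfl <;> exact hAC.concat_mem_of_not_mem hCB hB hW hWC hx
    · exact hrest x hx hx'

/-- Characterization of gaps in `(𝒲, ≤)`: `A < B` is a gap iff `B` arises from `A`
by replacing the two one-letter extensions `W ++ [0]`, `W ++ [1]` (members of `A`)
by the single word `W`. -/
theorem W_gap_iff (A B : Finset (List Bool)) (hA : WAntichain A) (hB : WAntichain B) :
    (Wle A B ∧ A ≠ B ∧
      ¬ ∃ C : Finset (List Bool), WAntichain C ∧ (Wle A C ∧ A ≠ C) ∧ (Wle C B ∧ C ≠ B)) ↔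
    ∃ W ∈ B, (W ++ [false]) ∈ A ∧ (W ++ [true]) ∈ A ∧
      A \ {W ++ [false], W ++ [true]} = B \ {W} := by
  constructor
  · rintro ⟨hAB, hne, hgap⟩
    obtain ⟨t, h0, h1, rfl⟩ := exists_eq_mergeChildren_of_gap hA hB hAB hne hgap
    obtain ⟨ht, hdiff⟩ := (eq_mergeChildren_iff hA h0).mpr rfl
    exact ⟨t, ht, h0, h1, hdiff⟩
  · rintro ⟨W, hW, h0, h1, hdiff⟩
    obtain rfl := (eq_mergeChildren_iff hA h0).mp ⟨hW, hdiff⟩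
    refine ⟨wle_mergeChildren A W, ne_mergeChildren h0, ?_⟩
    rintro ⟨C, hC, ⟨hAC, hAC'⟩, hCB, hCB'⟩
    rcases eq_or_eq_of_wle_mergeChildren hB hC h0 h1 hAC hCB with rfl | rfl
    exacts [hAC' rfl, hCB' rfl]
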